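/- The boundary value problem u'''(t) = -(1/4)[t + e^{u(t)} + (u'(t))² + u''(t)] on (0,1) with u(0)=u''(0)=u'(1)=0 has a unique monotone (nondecreasing) nonnegative solution u satisfying 0 ≤ u(t) ≤ 0.835/3, 0 ≤ u'(t) ≤ 0.835/2, |u''(t)| ≤ 0.835 on [0,1]. -/

import Mathlib

/-- `u` solves the ODE of Example 4.4.1 on `(0,1)` with `u(0)=u''(0)=u'(1)=0`. -/
def IsSolution (u : ℝ → ℝ) : Prop :=
  ContDiff ℝ 2 u ∧
  (∀ t ∈ Set.Ioo (0:ℝ) 1,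
    HasDerivAt (deriv (deriv u))
      (-(1 / 4) * (t + Real.exp (u t) + (deriv u t) ^ 2 + deriv (deriv u) t)) t) ∧
  u 0 = 0 ∧ deriv (deriv u) 0 = 0 ∧ deriv u 1 = 0

/-- bounds of Example 4.4.1. -/
def InBounds (u : ℝ → ℝ) : Prop :=
  ∀ t ∈ Set.Icc (0:ℝ) 1,
    u t ∈ Set.Icc 0 ((0.835 : ℝ) / 3) ∧ deriv u t ∈ Set.Icc 0 ((0.835 : ℝ) / 2) ∧
      |deriv (deriv u) t| ≤ (0.835 : ℝ)

/-!
Writing `h = -u'''`, the boundary conditions give `u'' = -∫₀ᵗ h`, `u' = ∫ₜ¹ ∫₀ˢ h` and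
`u = ∫₀ᵗ u'`, with sup norms at most `‖h‖`, `‖h‖ / 2`, `‖h‖ / 3` (the constants `M₂, M₁, M₀`).
Since `-M ≤ f ≤ 0` on the domain, the solutions satisfying the bounds are exactly the fixed
points, in `{h | 0 ≤ h ≤ M}`, of `h ↦ -f(t, u, u', u'')`. The Lipschitz bounds of `f` make this
map a contraction with constant `L₀M₀ + L₁M₁ + L₂M₂ < 1 / 2`, so Banach's fixed point theorem
gives existence and uniqueness.
-/

open Set Real Function intervalIntegral

noncomputable section

namespace Example441

-- For the solution `u` of `u''' = -f`, `u(0) = u''(0) = u'(1) = 0` these are `-u''`, `u'`, `u`.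
def green2 (f : ℝ → ℝ) (t : ℝ) : ℝ := ∫ s in (0:ℝ)..t, f s

def green1 (f : ℝ → ℝ) (t : ℝ) : ℝ := ∫ s in t..1, green2 f s

def green0 (f : ℝ → ℝ) (t : ℝ) : ℝ := ∫ s in (0:ℝ)..t, green1 f s

section Green

variable {f g u : ℝ → ℝ}

theorem hasDerivAt_green2 (hf : Continuous f) (t : ℝ) : HasDerivAt (green2 f) (f t) t :=
  hf.integral_hasStrictDerivAt 0 t |>.hasDerivAt

theorem continuous_green2 (hf : Continuous f) : Continuous (green2 f) :=
  continuous_iff_continuousAt.2 fun t => (hasDerivAt_green2 hf t).continuousAt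

theorem hasDerivAt_green1 (hf : Continuous f) (t : ℝ) :
    HasDerivAt (green1 f) (-green2 f t) t := by
  have : green1 f = fun t => -∫ s in (1:ℝ)..t, green2 f s := by
    funext t; exact integral_symm _ _
  rw [this]
  exact ((continuous_green2 hf).integral_hasStrictDerivAt 1 t).hasDerivAt.neg

theorem continuous_green1 (hf : Continuous f) : Continuous (green1 f) :=
  continuous_iff_continuousAt.2 fun t => (hasDerivAt_green1 hf t).continuousAt

theorem hasDerivAt_green0 (hf : Continuous f) (t : ℝ) : HasDerivAt (green0 f) (green1 f t) t :=
  (continuous_green1 hf).integral_hasStrictDerivAt 0 t |>.hasDerivAt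

theorem continuous_green0 (hf : Continuous f) : Continuous (green0 f) :=
  continuous_iff_continuousAt.2 fun t => (hasDerivAt_green0 hf t).continuousAt

theorem deriv_green0 (hf : Continuous f) : deriv (green0 f) = green1 f :=
  funext fun t => (hasDerivAt_green0 hf t).deriv

theorem deriv_green1 (hf : Continuous f) : deriv (green1 f) = -green2 f :=
  funext fun t => (hasDerivAt_green1 hf t).deriv

theorem contDiff_green0 (hf : Continuous f) : ContDiff ℝ 2 (green0 f) := by
  rw [show (2 : WithTop ℕ∞) = 1 + 1 from rfl, contDiff_succ_iff_deriv, deriv_green0 hf,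
    contDiff_one_iff_deriv, deriv_green1 hf]
  exact ⟨fun t => (hasDerivAt_green0 hf t).differentiableAt, by simp,
    fun t => (hasDerivAt_green1 hf t).differentiableAt, (continuous_green2 hf).neg⟩

theorem green2_sub (hf : Continuous f) (hg : Continuous g) :
    green2 (f - g) = green2 f - green2 g :=
  funext fun t => integral_sub (hf.intervalIntegrable 0 t) (hg.intervalIntegrable 0 t)

theorem green1_sub (hf : Continuous f) (hg : Continuous g) :
    green1 (f - g) = green1 f - green1 g :=
  funext fun t => by
    rw [green1, green2_sub hf hg]
    exact integral_sub ((continuous_green2 hf).intervalIntegrable t 1)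
      ((continuous_green2 hg).intervalIntegrable t 1)

theorem green0_sub (hf : Continuous f) (hg : Continuous g) :
    green0 (f - g) = green0 f - green0 g :=
  funext fun t => by
    rw [green0, green1_sub hf hg]
    exact integral_sub ((continuous_green1 hf).intervalIntegrable 0 t)
      ((continuous_green1 hg).intervalIntegrable 0 t)

theorem green2_mono (hf : Continuous f) (hg : Continuous g)
    (hfg : ∀ s ∈ Icc (0:ℝ) 1, f s ≤ g s) {t : ℝ} (ht : t ∈ Icc (0:ℝ) 1) :
    green2 f t ≤ green2 g t :=
  integral_mono_on ht.1 (hf.intervalIntegrable 0 t) (hg.intervalIntegrable 0 t)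
    fun s hs => hfg s ⟨hs.1, hs.2.trans ht.2⟩

theorem green1_mono (hf : Continuous f) (hg : Continuous g)
    (hfg : ∀ s ∈ Icc (0:ℝ) 1, f s ≤ g s) {t : ℝ} (ht : t ∈ Icc (0:ℝ) 1) :
    green1 f t ≤ green1 g t :=
  integral_mono_on ht.2 ((continuous_green2 hf).intervalIntegrable t 1)
    ((continuous_green2 hg).intervalIntegrable t 1)
    fun _ hs => green2_mono hf hg hfg ⟨ht.1.trans hs.1, hs.2⟩

theorem green0_mono (hf : Continuous f) (hg : Continuous g)
    (hfg : ∀ s ∈ Icc (0:ℝ) 1, f s ≤ g s) {t : ℝ} (ht : t ∈ Icc (0:ℝ) 1) :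
    green0 f t ≤ green0 g t :=
  integral_mono_on ht.1 ((continuous_green1 hf).intervalIntegrable 0 t)
    ((continuous_green1 hg).intervalIntegrable 0 t)
    fun _ hs => green1_mono hf hg hfg ⟨hs.1, hs.2.trans ht.2⟩

theorem green2_const (c t : ℝ) : green2 (fun _ => c) t = c * t := by
  simp [green2, mul_comm]

theorem green1_const (c t : ℝ) : green1 (fun _ => c) t = c * (1 - t ^ 2) / 2 := by
  rw [green1]
  simp only [green2_const]
  rw [integral_const_mul, integral_id]
  ring

theorem green0_const (c t : ℝ) : green0 (fun _ => c) t = c * (3 * t - t ^ 3) / 6 := by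
  simp only [green0, green1_const]
  simp [integral_div, integral_sub, integral_const_mul]
  ring

theorem green2_mem_Icc {a b : ℝ} (hf : Continuous f) (ha : a ≤ 0) (hb : 0 ≤ b)
    (hab : ∀ s ∈ Icc (0:ℝ) 1, f s ∈ Icc a b) {t : ℝ} (ht : t ∈ Icc (0:ℝ) 1) :
    green2 f t ∈ Icc a b := by
  have lo := green2_mono continuous_const hf (fun s hs => (hab s hs).1) ht
  have hi := green2_mono hf continuous_const (fun s hs => (hab s hs).2) ht
  rw [green2_const] at lo hi
  constructor <;> nlinarith [ht.1, ht.2]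

theorem green1_mem_Icc {a b : ℝ} (hf : Continuous f) (ha : a ≤ 0) (hb : 0 ≤ b)
    (hab : ∀ s ∈ Icc (0:ℝ) 1, f s ∈ Icc a b) {t : ℝ} (ht : t ∈ Icc (0:ℝ) 1) :
    green1 f t ∈ Icc (a / 2) (b / 2) := by
  have lo := green1_mono continuous_const hf (fun s hs => (hab s hs).1) ht
  have hi := green1_mono hf continuous_const (fun s hs => (hab s hs).2) ht
  rw [green1_const] at lo hi
  constructor <;> nlinarith [ht.1, ht.2, sq_nonneg t]

theorem green0_mem_Icc {a b : ℝ} (hf : Continuous f) (ha : a ≤ 0) (hb : 0 ≤ b)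
    (hab : ∀ s ∈ Icc (0:ℝ) 1, f s ∈ Icc a b) {t : ℝ} (ht : t ∈ Icc (0:ℝ) 1) :
    green0 f t ∈ Icc (a / 3) (b / 3) := by
  have lo := green0_mono continuous_const hf (fun s hs => (hab s hs).1) ht
  have hi := green0_mono hf continuous_const (fun s hs => (hab s hs).2) ht
  rw [green0_const] at lo hi
  have : 0 ≤ 3 * t - t ^ 3 ∧ 3 * t - t ^ 3 ≤ 2 := by
    constructor <;> nlinarith [ht.1, ht.2, mul_nonneg ht.1 ht.1, sq_nonneg (t - 1)]
  constructor <;> nlinarith [this.1, this.2]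

theorem abs_green2_sub_le {d : ℝ} (hf : Continuous f) (hg : Continuous g)
    (hd : ∀ s ∈ Icc (0:ℝ) 1, |f s - g s| ≤ d) {t : ℝ} (ht : t ∈ Icc (0:ℝ) 1) :
    |green2 f t - green2 g t| ≤ d := by
  have hd0 : 0 ≤ d := (abs_nonneg _).trans (hd 0 (left_mem_Icc.2 zero_le_one))
  have := green2_mem_Icc (hf.sub hg) (neg_nonpos.2 hd0) hd0 (fun s hs => abs_le.1 (hd s hs)) ht
  rw [green2_sub hf hg] at this
  exact abs_le.2 this

theorem abs_green1_sub_le {d : ℝ} (hf : Continuous f) (hg : Continuous g)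
    (hd : ∀ s ∈ Icc (0:ℝ) 1, |f s - g s| ≤ d) {t : ℝ} (ht : t ∈ Icc (0:ℝ) 1) :
    |green1 f t - green1 g t| ≤ d / 2 := by
  have hd0 : 0 ≤ d := (abs_nonneg _).trans (hd 0 (left_mem_Icc.2 zero_le_one))
  have := green1_mem_Icc (hf.sub hg) (neg_nonpos.2 hd0) hd0 (fun s hs => abs_le.1 (hd s hs)) ht
  rw [green1_sub hf hg, neg_div] at this
  exact abs_le.2 this

theorem abs_green0_sub_le {d : ℝ} (hf : Continuous f) (hg : Continuous g)
    (hd : ∀ s ∈ Icc (0:ℝ) 1, |f s - g s| ≤ d) {t : ℝ} (ht : t ∈ Icc (0:ℝ) 1) :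
    |green0 f t - green0 g t| ≤ d / 3 := by
  have hd0 : 0 ≤ d := (abs_nonneg _).trans (hd 0 (left_mem_Icc.2 zero_le_one))
  have := green0_mem_Icc (hf.sub hg) (neg_nonpos.2 hd0) hd0 (fun s hs => abs_le.1 (hd s hs)) ht
  rw [green0_sub hf hg, neg_div] at this
  exact abs_le.2 this

theorem green2_zero : green2 f 0 = 0 := integral_same

theorem green1_one : green1 f 1 = 0 := integral_same

theorem green0_zero : green0 f 0 = 0 := integral_same

theorem eqOn_green2 (hf : Continuous f) (hu : ContDiff ℝ 2 u)
    (h3 : ∀ t ∈ Ioo (0:ℝ) 1, HasDerivAt (deriv (deriv u)) (-f t) t)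
    (h2 : deriv (deriv u) 0 = 0) :
    EqOn (green2 f) (-deriv (deriv u)) (Icc 0 1) := by
  intro t ht
  have hu'' : Continuous (deriv (deriv u)) := (hu.deriv' (n := 1)).continuous_deriv_one
  have := integral_eq_sub_of_hasDerivAt_of_le ht.1 hu''.continuousOn
    (fun s hs => h3 s ⟨hs.1, hs.2.trans_le ht.2⟩) (hf.neg.intervalIntegrable 0 t)
  rw [integral_neg, h2, sub_zero] at this
  simp [green2, ← this]

theorem eqOn_green1 (hf : Continuous f) (hu : ContDiff ℝ 2 u)
    (h3 : ∀ t ∈ Ioo (0:ℝ) 1, HasDerivAt (deriv (deriv u)) (-f t) t)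
    (h2 : deriv (deriv u) 0 = 0) (h1 : deriv u 1 = 0) :
    EqOn (green1 f) (deriv u) (Icc 0 1) := by
  intro t ht
  have hu'' : Continuous (deriv (deriv u)) := (hu.deriv' (n := 1)).continuous_deriv_one
  have := integral_eq_sub_of_hasDerivAt (fun s _ => (hu.differentiable_deriv_two s).hasDerivAt)
    (hu''.intervalIntegrable t 1)
  rw [h1, zero_sub] at this
  rw [green1, integral_congr (g := fun s => -deriv (deriv u) s), integral_neg, this, neg_neg]
  intro s hs
  rw [uIcc_of_le ht.2] at hs
  exact eqOn_green2 hf hu h3 h2 ⟨ht.1.trans hs.1, hs.2⟩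

theorem eqOn_green0 (hf : Continuous f) (hu : ContDiff ℝ 2 u)
    (h3 : ∀ t ∈ Ioo (0:ℝ) 1, HasDerivAt (deriv (deriv u)) (-f t) t)
    (h2 : deriv (deriv u) 0 = 0) (h1 : deriv u 1 = 0) (h0 : u 0 = 0) :
    EqOn (green0 f) u (Icc 0 1) := by
  intro t ht
  have := integral_eq_sub_of_hasDerivAt
    (fun s _ => (hu.differentiable (by norm_num) s).hasDerivAt)
    ((hu.continuous_deriv (by norm_num)).intervalIntegrable 0 t)
  rw [h0, sub_zero] at this
  rw [green0, integral_congr (g := deriv u), this]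
  intro s hs
  rw [uIcc_of_le ht.1] at hs
  exact eqOn_green1 hf hu h3 h2 h1 ⟨hs.1, hs.2.trans ht.2⟩

end Green

-- The paper's `f`: the equation reads `u''' = f(t, u, u', u'')`.
def rhs (t x y z : ℝ) : ℝ := -(1 / 4) * (t + exp x + y ^ 2 + z)

-- `rhs_mem_Icc` is tight: it needs `exp (0.835 / 3) ≤ 1.3306`.
theorem exp_third_le : exp (0.835 / 3) ≤ 1.33 :=
  (exp_le_two_add_div_two_sub (by norm_num) (by norm_num)).trans (by norm_num)

theorem rhs_mem_Icc {t x y z : ℝ} (ht : t ∈ Icc (0:ℝ) 1) (hx : x ∈ Icc (0:ℝ) (0.835 / 3))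
    (hy : y ∈ Icc (0:ℝ) (0.835 / 2)) (hz : |z| ≤ 0.835) : rhs t x y z ∈ Icc (-0.835) 0 := by
  have hex : 1 ≤ exp x := one_le_exp hx.1
  have hex' : exp x ≤ 1.33 := (exp_le_exp.2 hx.2).trans exp_third_le
  obtain ⟨hz₁, hz₂⟩ := abs_le.1 hz
  unfold rhs
  constructor <;> nlinarith [ht.1, ht.2, hy.1, hy.2]

theorem abs_exp_sub_exp_le {x y b : ℝ} (hx : x ≤ b) (hy : y ≤ b) :
    |exp x - exp y| ≤ exp b * |x - y| := by
  wlog hxy : y ≤ x generalizing x y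
  · rw [abs_sub_comm, abs_sub_comm x]
    exact this hy hx (le_of_not_ge hxy)
  have key : exp x - exp y ≤ exp x * (x - y) := by
    have := add_one_le_exp (y - x)
    rw [exp_sub] at this
    have hx0 := exp_pos x
    rw [le_div_iff₀ hx0] at this
    nlinarith
  rw [abs_of_nonneg (sub_nonneg.2 (exp_le_exp.2 hxy)), abs_of_nonneg (sub_nonneg.2 hxy)]
  exact key.trans (mul_le_mul_of_nonneg_right (exp_le_exp.2 hx) (sub_nonneg.2 hxy))

theorem abs_rhs_sub_rhs_le {t x x' y y' z z' : ℝ} (hx : x ≤ 0.835 / 3) (hx' : x' ≤ 0.835 / 3)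
    (hy : |y| ≤ 0.835 / 2) (hy' : |y'| ≤ 0.835 / 2) :
    |rhs t x y z - rhs t x' y' z'| ≤
      exp (0.835 / 3) / 4 * |x - x'| + 0.835 / 4 * |y - y'| + 1 / 4 * |z - z'| := by
  have hsq : |y ^ 2 - y' ^ 2| ≤ 0.835 * |y - y'| := by
    rw [sq_sub_sq, abs_mul]
    exact mul_le_mul_of_nonneg_right ((abs_add_le y y').trans (by linarith)) (abs_nonneg _)
  have hexp := abs_exp_sub_exp_le hx hx'
  have : rhs t x y z - rhs t x' y' z' =
      -(1 / 4) * ((exp x - exp x') + (y ^ 2 - y' ^ 2) + (z - z')) := by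
    unfold rhs; ring
  rw [this, abs_mul, abs_neg, abs_of_pos (by norm_num : (0:ℝ) < 1 / 4)]
  calc 1 / 4 * |(exp x - exp x') + (y ^ 2 - y' ^ 2) + (z - z')|
      ≤ 1 / 4 * (|exp x - exp x'| + |y ^ 2 - y' ^ 2| + |z - z'|) := by
        gcongr; exact abs_add_three _ _ _
    _ ≤ _ := by linarith

abbrev extend (h : C(Icc (0:ℝ) 1, ℝ)) : ℝ → ℝ := IccExtend zero_le_one h

theorem continuous_extend (h : C(Icc (0:ℝ) 1, ℝ)) : Continuous (extend h) := by fun_prop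

theorem abs_extend_sub_extend_le (h g : C(Icc (0:ℝ) 1, ℝ)) (s : ℝ) :
    |extend h s - extend g s| ≤ dist h g := by
  rw [← Real.dist_eq]
  exact ContinuousMap.dist_apply_le_dist _

def T (h : C(Icc (0:ℝ) 1, ℝ)) : C(Icc (0:ℝ) 1, ℝ) where
  toFun t := -rhs t (green0 (extend h) t) (green1 (extend h) t) (-green2 (extend h) t)
  continuous_toFun := by
    have h₀ := continuous_green0 (continuous_extend h)
    have h₁ := continuous_green1 (continuous_extend h)
    have h₂ := continuous_green2 (continuous_extend h)
    unfold rhs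
    fun_prop

def admissible : Set C(Icc (0:ℝ) 1, ℝ) := {h | ∀ t, h t ∈ Icc 0 0.835}

theorem isClosed_admissible : IsClosed admissible := by
  simp only [admissible, ofPred_forall]
  exact isClosed_iInter fun t => isClosed_Icc.preimage (continuous_eval_const t)

theorem T_apply (h : C(Icc (0:ℝ) 1, ℝ)) (t : Icc (0:ℝ) 1) :
    T h t = -rhs t (green0 (extend h) t) (green1 (extend h) t) (-green2 (extend h) t) :=
  rfl

theorem green_extend_mem_Icc {h : C(Icc (0:ℝ) 1, ℝ)} (hh : h ∈ admissible) {t : ℝ}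
    (ht : t ∈ Icc (0:ℝ) 1) :
    green0 (extend h) t ∈ Icc 0 (0.835 / 3) ∧ green1 (extend h) t ∈ Icc 0 (0.835 / 2) ∧
      green2 (extend h) t ∈ Icc 0 0.835 := by
  have hc := continuous_extend h
  have hb : ∀ s ∈ Icc (0:ℝ) 1, extend h s ∈ Icc 0 0.835 := fun s _ => hh _
  refine ⟨?_, ?_, green2_mem_Icc hc le_rfl (by norm_num) hb ht⟩
  · simpa only [zero_div] using green0_mem_Icc hc le_rfl (by norm_num) hb ht
  · simpa only [zero_div] using green1_mem_Icc hc le_rfl (by norm_num) hb ht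

theorem mapsTo_T : MapsTo T admissible admissible := by
  intro h hh t
  obtain ⟨h0, h1, h2⟩ := green_extend_mem_Icc hh t.2
  have := rhs_mem_Icc (z := -green2 (extend h) t) t.2 h0 h1
    (abs_le.2 ⟨by linarith [h2.2], by linarith [h2.1]⟩)
  rw [T_apply]
  exact ⟨by linarith [this.2], by linarith [this.1]⟩

theorem dist_T_le {h g : C(Icc (0:ℝ) 1, ℝ)} (hh : h ∈ admissible) (hg : g ∈ admissible) :
    dist (T h) (T g) ≤ 1 / 2 * dist h g := by
  refine (ContinuousMap.dist_le (by positivity)).2 fun t => ?_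
  obtain ⟨h0, h1, -⟩ := green_extend_mem_Icc hh t.2
  obtain ⟨g0, g1, -⟩ := green_extend_mem_Icc hg t.2
  have hd : ∀ s ∈ Icc (0:ℝ) 1, |extend h s - extend g s| ≤ dist h g :=
    fun s _ => abs_extend_sub_extend_le h g s
  have e0 := abs_green0_sub_le (continuous_extend h) (continuous_extend g) hd t.2
  have e1 := abs_green1_sub_le (continuous_extend h) (continuous_extend g) hd t.2
  have e2 := abs_green2_sub_le (continuous_extend h) (continuous_extend g) hd t.2
  have hL := abs_rhs_sub_rhs_le (t := t) (z := -green2 (extend h) t) (z' := -green2 (extend g) t)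
    h0.2 g0.2 ((abs_of_nonneg h1.1).le.trans h1.2) ((abs_of_nonneg g1.1).le.trans g1.2)
  rw [neg_sub_neg, abs_sub_comm (green2 _ _)] at hL
  rw [Real.dist_eq, T_apply, T_apply, neg_sub_neg, abs_sub_comm]
  have hd0 : 0 ≤ dist h g := dist_nonneg
  calc _ ≤ exp (0.835 / 3) / 4 * (dist h g / 3) + 0.835 / 4 * (dist h g / 2)
        + 1 / 4 * dist h g := by
          refine hL.trans ?_
          gcongr
    _ ≤ 1 / 2 * dist h g := by nlinarith [exp_third_le]

theorem exists_isFixedPt_T : ∃ h ∈ admissible, IsFixedPt T h := by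
  have hK : ContractingWith (1 / 2) (mapsTo_T.restrict T admissible admissible) := by
    refine ⟨by norm_num, LipschitzWith.of_dist_le_mul fun h g => ?_⟩
    simpa [Subtype.dist_eq] using dist_T_le h.2 g.2
  obtain ⟨h, hh, hfix, -⟩ := hK.exists_fixedPoint' isClosed_admissible.isComplete mapsTo_T
    (x := 0) (fun _ => by norm_num) (edist_ne_top _ _)
  exact ⟨h, hh, hfix⟩

theorem eq_of_isFixedPt_T {h g : C(Icc (0:ℝ) 1, ℝ)} (hh : h ∈ admissible)
    (hg : g ∈ admissible) (hfh : IsFixedPt T h) (hfg : IsFixedPt T g) : h = g := by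
  have := dist_T_le hh hg
  rw [hfh.eq, hfg.eq] at this
  exact dist_le_zero.1 (by linarith [dist_nonneg (x := h) (y := g)])

theorem extend_apply (h : C(Icc (0:ℝ) 1, ℝ)) {t : ℝ} (ht : t ∈ Icc (0:ℝ) 1) :
    extend h t = h ⟨t, ht⟩ :=
  IccExtend_of_mem _ _ ht

theorem isSolution_green0 {h : C(Icc (0:ℝ) 1, ℝ)} (hfix : IsFixedPt T h) :
    IsSolution (green0 (extend h)) := by
  have hc := continuous_extend h
  refine ⟨contDiff_green0 hc, fun t ht => ?_, green0_zero, ?_, ?_⟩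
  · rw [deriv_green0 hc, deriv_green1 hc]
    have hht : extend h t = T h ⟨t, Ioo_subset_Icc_self ht⟩ := by rw [hfix.eq, extend_apply]
    refine (hasDerivAt_green2 hc t).neg.congr_deriv ?_
    rw [hht, T_apply, neg_neg]
    rfl
  · simp [deriv_green0 hc, deriv_green1 hc, green2_zero]
  · rw [deriv_green0 hc, green1_one]

theorem inBounds_green0 {h : C(Icc (0:ℝ) 1, ℝ)} (hh : h ∈ admissible) :
    InBounds (green0 (extend h)) := by
  intro t ht
  obtain ⟨h0, h1, h2⟩ := green_extend_mem_Icc hh ht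
  rw [deriv_green0 (continuous_extend h), deriv_green1 (continuous_extend h), Pi.neg_apply,
    abs_neg, abs_of_nonneg h2.1]
  exact ⟨h0, h1, h2.2⟩

theorem monotoneOn_green0 {h : C(Icc (0:ℝ) 1, ℝ)} (hh : h ∈ admissible) :
    MonotoneOn (green0 (extend h)) (Icc 0 1) := by
  have hc := continuous_extend h
  refine monotoneOn_of_deriv_nonneg (convex_Icc 0 1) (continuous_green0 hc).continuousOn
    (fun t _ => (hasDerivAt_green0 hc t).differentiableAt.differentiableWithinAt) fun t ht => ?_
  rw [interior_Icc] at ht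
  rw [deriv_green0 hc]
  exact (green_extend_mem_Icc hh (Ioo_subset_Icc_self ht)).2.1.1

theorem exists_isFixedPt_of_isSolution {v : ℝ → ℝ} (hv : IsSolution v) (hb : InBounds v) :
    ∃ g ∈ admissible, IsFixedPt T g ∧ EqOn (green0 (extend g)) v (Icc 0 1) := by
  obtain ⟨hC2, hODE, h0, h2, h1⟩ := hv
  have hv₀ : Continuous v := hC2.continuous
  have hv₁ : Continuous (deriv v) := hC2.continuous_deriv (by norm_num)
  have hv₂ : Continuous (deriv (deriv v)) := (hC2.deriv' (n := 1)).continuous_deriv_one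
  let w : C(ℝ, ℝ) := ⟨fun t => -rhs t (v t) (deriv v t) (deriv (deriv v) t), by
    unfold rhs; fun_prop⟩
  let g : C(Icc (0:ℝ) 1, ℝ) := w.restrict (Icc 0 1)
  have hc := continuous_extend g
  have h3 : ∀ t ∈ Ioo (0:ℝ) 1, HasDerivAt (deriv (deriv v)) (-extend g t) t := fun t ht => by
    rw [extend_apply g (Ioo_subset_Icc_self ht)]
    simpa [g, w, rhs] using hODE t ht
  have E2 := eqOn_green2 hc hC2 h3 h2
  have E1 := eqOn_green1 hc hC2 h3 h2 h1
  refine ⟨g, fun t => ?_, ContinuousMap.ext fun t => ?_, eqOn_green0 hc hC2 h3 h2 h1 h0⟩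
  · obtain ⟨hb₀, hb₁, hb₂⟩ := hb t t.2
    have := rhs_mem_Icc t.2 hb₀ hb₁ hb₂
    show -rhs _ _ _ _ ∈ Icc 0 0.835
    exact ⟨by linarith [this.2], by linarith [this.1]⟩
  · rw [T_apply, eqOn_green0 hc hC2 h3 h2 h1 h0 t.2, E1 t.2, E2 t.2, Pi.neg_apply, neg_neg]
    rfl

end Example441

end

open Example441

theorem example_441 :
    ∃ u : ℝ → ℝ, (IsSolution u ∧ InBounds u ∧
      (∀ t ∈ Set.Icc (0:ℝ) 1, 0 ≤ u t) ∧ MonotoneOn u (Set.Icc (0:ℝ) 1)) ∧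
      ∀ v : ℝ → ℝ, IsSolution v ∧ InBounds v → ∀ t ∈ Set.Icc (0:ℝ) 1, v t = u t := by
  obtain ⟨h, hh, hfix⟩ := exists_isFixedPt_T
  refine ⟨green0 (extend h), ⟨isSolution_green0 hfix, inBounds_green0 hh,
    fun t ht => (inBounds_green0 hh t ht).1.1, monotoneOn_green0 hh⟩, ?_⟩
  rintro v ⟨hv, hb⟩ t ht
  obtain ⟨g, hg, hgfix, hgv⟩ := exists_isFixedPt_of_isSolution hv hb
  rw [← hgv ht, eq_of_isFixedPt_T hg hh hgfix hfix]
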